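/- Let q be an odd prime with q ≡ 2 (mod 3), and let p be an integer not divisible by q. Then for every integer j, Σ_{ν=0}^{q−1} ζ_q^{jν − 4pν³} = 0 if and only if q divides j. Equivalently, 𝔓(p/q) = { j ∈ [0, 2q−1] ∩ ℤ : j ≡ 0 mod q }. -/
import Mathlib


/-- ζ_m = exp(2πi/m), the primitive m-th root of unity. -/
noncomputable def zeta (m : ℕ) : ℂ := Complex.exp (2 * Real.pi * Complex.I / (m : ℂ))

open Finset Polynomial



section aux

variable {q : ℕ}

lemma zeta_prim (hq : q ≠ 0) : IsPrimitiveRoot (zeta q) q :=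
  Complex.isPrimitiveRoot_exp q hq

lemma zeta_zpow_val [NeZero q] (m : ℤ) :
    zeta q ^ m = zeta q ^ (((m : ZMod q)).val) := by
  have hq : q ≠ 0 := NeZero.ne q
  have hζ := zeta_prim hq
  have hne : zeta q ≠ 0 := Complex.exp_ne_zero _
  have hdvd : (q : ℤ) ∣ m - ((m : ZMod q).val : ℤ) := by
    rw [← ZMod.intCast_zmod_eq_zero_iff_dvd]
    push_cast
    rw [ZMod.natCast_val, ZMod.cast_id]
    ring
  have h1 : zeta q ^ (m - ((m : ZMod q).val : ℤ)) = 1 :=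
    (hζ.zpow_eq_one_iff_dvd _).mpr hdvd
  calc zeta q ^ m = zeta q ^ (((m : ZMod q).val : ℤ) + (m - ((m : ZMod q).val : ℤ))) := by
        ring_nf
    _ = zeta q ^ (((m : ZMod q).val : ℤ)) * zeta q ^ (m - ((m : ZMod q).val : ℤ)) :=
        zpow_add₀ hne _ _
    _ = zeta q ^ ((m : ZMod q)).val := by rw [h1, mul_one, zpow_natCast]

/-- cubing is injective on ZMod q when q ≡ 2 mod 3 -/
lemma cube_inj (hq : q.Prime) (hq2 : q % 3 = 2) :
    Function.Injective (fun x : ZMod q => x ^ 3) := by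
  haveI : Fact q.Prime := ⟨hq⟩
  obtain ⟨k, hk⟩ : ∃ k, 2 * q - 1 = 3 * k := ⟨(2 * q - 1) / 3, by omega⟩
  have hinv : ∀ x : ZMod q, (x ^ 3) ^ k = x := by
    intro x
    have h1 : (x ^ 3) ^ k = x ^ (2 * q - 1) := by rw [← pow_mul, ← hk]
    have h2 : 2 * q - 1 = q + (q - 1) := by omega
    have h3 : x ^ (q + (q - 1)) = x * x ^ (q - 1) := by
      rw [pow_add, ZMod.pow_card]
    have h4 : x * x ^ (q - 1) = x ^ q := by
      rw [← pow_succ']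
      congr 1
      omega
    rw [h1, h2, h3, h4, ZMod.pow_card]
  intro a b hab
  have := congrArg (fun z => z ^ k) hab
  simpa only [hinv] using this
end aux

section bij
variable {q : ℕ}

lemma g_bij_iff (hq : q.Prime) (hodd : Odd q) (hq2 : q % 3 = 2)
    (p : ℤ) (hp : ¬ (q : ℤ) ∣ p) (j : ℤ) :
    Function.Bijective (fun x : ZMod q => (j : ZMod q) * x - 4 * (p : ZMod q) * x ^ 3) ↔
    (j : ZMod q) = 0 := by
  haveI : Fact q.Prime := ⟨hq⟩
  have hq3 : q ≠ 3 := by intro h; rw [h] at hq2; norm_num at hq2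
  have hq2' : q ≠ 2 := by
    intro h; rw [h, Nat.odd_iff] at hodd; norm_num at hodd
  have hpne : (p : ZMod q) ≠ 0 := by
    rwa [Ne, ZMod.intCast_zmod_eq_zero_iff_dvd]
  have h4ne : (4 : ZMod q) ≠ 0 := by
    intro h
    have h4 : ((4 : ℕ) : ZMod q) = 0 := by exact_mod_cast h
    rw [ZMod.natCast_eq_zero_iff] at h4
    have h2 : q ∣ 2 ^ 2 := by norm_num; exact h4
    have hd2 := hq.dvd_of_dvd_pow h2
    have hle := Nat.le_of_dvd (by norm_num) hd2
    have hodd' := Nat.odd_iff.mp hodd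
    have := hq.two_le
    omega
  have h3ne : (3 : ZMod q) ≠ 0 := by
    intro h
    have h3 : ((3 : ℕ) : ZMod q) = 0 := by exact_mod_cast h
    rw [ZMod.natCast_eq_zero_iff] at h3
    have := (Nat.prime_dvd_prime_iff_eq hq (by norm_num)).mp h3
    exact hq3 this
  have hcne : (4 : ZMod q) * (p : ZMod q) ≠ 0 := mul_ne_zero h4ne hpne
  constructor
  · -- bijective → j = 0
    intro hbij
    by_contra hjne
    -- find x ≠ y with x² + xy + y² = a where a = j / (4p)
    set c : ZMod q := 4 * (p : ZMod q) with hc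
    set a : ZMod q := c⁻¹ * (j : ZMod q) with ha
    have hca : c * a = (j : ZMod q) := by
      rw [ha, ← mul_assoc, mul_inv_cancel₀ hcne, one_mul]
    have hane : a ≠ 0 := by
      intro h; rw [h, mul_zero] at hca; exact hjne hca.symm
    -- solve u² + 3w² = a
    obtain ⟨u, w, huw⟩ : ∃ u w : ZMod q, u ^ 2 + 3 * w ^ 2 = a := by
      have hchar : Fintype.card (ZMod q) % 2 = 1 := by
        rw [ZMod.card]; exact Nat.odd_iff.mp hodd
      have hf2 : (X ^ 2 : (ZMod q)[X]).degree = 2 := degree_X_pow 2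
      have hg2 : ((C 3) * X ^ 2 - C a : (ZMod q)[X]).degree = 2 := by
        rw [sub_eq_add_neg]
        rw [degree_add_eq_left_of_degree_lt]
        · rw [degree_C_mul_X_pow 2 h3ne]; rfl
        · rw [degree_C_mul_X_pow 2 h3ne, degree_neg]
          exact lt_of_le_of_lt (degree_C_le) (by norm_num)
      obtain ⟨u, w, h⟩ := FiniteField.exists_root_sum_quadratic hf2 hg2 hchar
      refine ⟨u, w, ?_⟩
      simp only [eval_pow, eval_X, eval_sub, eval_mul, eval_C] at h
      linear_combination h
    -- get x ≠ y with x² + xy + y² = a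
    obtain ⟨x, y, hxy, hQ⟩ : ∃ x y : ZMod q, x ≠ y ∧ x ^ 2 + x * y + y ^ 2 = a := by
      by_cases hcase : u - w = 2 * w
      · -- degenerate: a = 3x² with x = u - w; use (x, -2x)
        set x := u - w with hx
        have hax : 3 * x ^ 2 = a := by
          rw [hx]
          have : u = 3 * w := by linear_combination hcase
          rw [this] at huw ⊢
          linear_combination huw
        have hxne : x ≠ 0 := by
          intro h; rw [h] at hax; simp at hax; exact hane hax.symm
        refine ⟨x, -2 * x, ?_, ?_⟩
        · intro h
          have : (3 : ZMod q) * x = 0 := by linear_combination h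
          rcases mul_eq_zero.mp this with h' | h'
          · exact h3ne h'
          · exact hxne h'
        · linear_combination hax
      · exact ⟨u - w, 2 * w, hcase, by linear_combination huw⟩
    -- g x = g y contradicts injectivity
    have hg : (j : ZMod q) * x - 4 * (p : ZMod q) * x ^ 3
        = (j : ZMod q) * y - 4 * (p : ZMod q) * y ^ 3 := by
      have h1 : c * (x ^ 2 + x * y + y ^ 2) = (j : ZMod q) := by rw [hQ, hca]
      have : c = 4 * (p : ZMod q) := hc
      linear_combination (x - y) * h1.symm + (x ^ 3 - y ^ 3) * hc
    exact hxy (hbij.injective hg)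
  · -- j = 0 → bijective
    intro hj0
    have hinj : Function.Injective
        (fun x : ZMod q => (j : ZMod q) * x - 4 * (p : ZMod q) * x ^ 3) := by
      intro a b hab
      simp only [hj0, zero_mul, zero_sub] at hab
      have h3 : a ^ 3 = b ^ 3 := by
        have := neg_injective hab
        exact mul_left_cancel₀ hcne (by linear_combination this)
      exact cube_inj hq hq2 h3
    exact Finite.injective_iff_bijective.mp hinj

end bij

open Finset Polynomial

lemma key_sum {q : ℕ} (hq : q.Prime) {ζ : ℂ} (hζ : IsPrimitiveRoot ζ q)
    (N : ℕ → ℕ) (hN : ∑ r ∈ range q, N r = q) :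
    (∑ r ∈ range q, (N r : ℂ) * ζ ^ r) = 0 ↔ ∀ r < q, N r = 1 := by
  have hq1 : 1 < q := hq.one_lt
  have hgeom : ∑ r ∈ range q, ζ ^ r = 0 := hζ.geom_sum_eq_zero hq1
  constructor
  · intro h0
    set m := q - 1 with hm
    have hqm : q = m + 1 := (Nat.succ_pred_eq_of_pos hq.pos).symm
    -- polynomial
    set P : ℚ[X] := ∑ r ∈ range m, C ((N r : ℚ) - (N m : ℚ)) * X ^ r with hP
    have haev : aeval ζ P = 0 := by
      have h1 : ∑ r ∈ range m, (N r : ℂ) * ζ ^ r = -((N m : ℂ) * ζ ^ m) := by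
        have := h0
        rw [hqm, Finset.sum_range_succ] at this
        linear_combination this
      have h2 : ∑ r ∈ range m, ζ ^ r = -(ζ ^ m) := by
        have := hgeom
        rw [hqm, Finset.sum_range_succ] at this
        linear_combination this
      rw [hP]
      simp only [map_sum, map_mul, map_sub, aeval_C, aeval_X_pow, map_natCast]
      calc ∑ r ∈ range m, ((N r : ℂ) - (N m : ℂ)) * ζ ^ r
          = (∑ r ∈ range m, (N r : ℂ) * ζ ^ r) - (N m : ℂ) * ∑ r ∈ range m, ζ ^ r := by
            rw [Finset.mul_sum, ← Finset.sum_sub_distrib]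
            exact Finset.sum_congr rfl fun r _ => by ring
        _ = 0 := by rw [h1, h2]; ring
    have hPz : P = 0 := by
      by_contra hPne
      have hdvd : minpoly ℚ ζ ∣ P := minpoly.dvd ℚ ζ haev
      have hdeg : (minpoly ℚ ζ).degree ≤ P.degree := degree_le_of_dvd hdvd hPne
      have hmp : minpoly ℚ ζ = cyclotomic q ℚ := (cyclotomic_eq_minpoly_rat hζ hq.pos).symm
      have hdc : (cyclotomic q ℚ).degree = (q.totient : ℕ) := degree_cyclotomic q ℚ
      have hPdeg : P.degree < (m : ℕ) := by
        rw [hP]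
        refine lt_of_le_of_lt (degree_sum_le _ _) ?_
        refine (Finset.sup_lt_iff (WithBot.bot_lt_coe m)).mpr ?_
        intro r hr
        exact lt_of_le_of_lt (degree_C_mul_X_pow_le r _)
          (by exact_mod_cast Nat.cast_lt.mpr (Finset.mem_range.mp hr) : (r : WithBot ℕ) < (m : ℕ))
      have htot : q.totient = m := by
        rw [Nat.totient_prime hq]
      rw [hmp, hdc, htot] at hdeg
      exact absurd (lt_of_le_of_lt hdeg hPdeg) (lt_irrefl _)
    have hcoeff : ∀ r < m, (N r : ℚ) = (N m : ℚ) := by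
      intro r hr
      have := congrArg (fun p => Polynomial.coeff p r) hPz
      simp only [hP, finset_sum_coeff, coeff_C_mul, coeff_X_pow, coeff_zero] at this
      rw [Finset.sum_eq_single r] at this
      · have h3 : (N r : ℚ) - (N m : ℚ) = 0 := by simpa using this
        exact_mod_cast sub_eq_zero.mp h3
      · intro b _ hb
        simp [(Ne.symm hb)]
      · intro hri
        exact absurd (Finset.mem_range.mpr hr) hri
    -- all N r equal for r < q, and sum is q, so each is 1
    have hall : ∀ r < q, N r = N m := by
      intro r hr
      rcases Nat.lt_succ_iff_lt_or_eq.mp (hqm ▸ hr) with h | h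
      · exact_mod_cast hcoeff r h
      · rw [h]
    have hsum : ∑ r ∈ range q, N r = q * N m := by
      rw [Finset.sum_congr rfl fun r hr => hall r (Finset.mem_range.mp hr)]
      simp [Finset.sum_const, mul_comm]
    have hNm : N m = 1 := by
      have : q * N m = q * 1 := by omega
      exact Nat.eq_of_mul_eq_mul_left hq.pos this
    intro r hr
    rw [hall r hr, hNm]
  · intro h1
    rw [Finset.sum_congr rfl fun r hr => by rw [h1 r (Finset.mem_range.mp hr)]]
    simpa using hgeom

/-- For an odd prime q ≡ 2 (mod 3) and an integer p not divisible by q,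
the even partial Kummer sum Σ_{ν=0}^{q−1} ζ_q^{jν − 4pν³} vanishes
if and only if q divides j. -/
theorem points_of_constancy_q_two_mod_three
    (q : ℕ) (hq : q.Prime) (hodd : Odd q) (hq2 : q % 3 = 2)
    (p : ℤ) (hp : ¬ (q : ℤ) ∣ p) (j : ℤ) :
    (∑ ν ∈ Finset.range q, zeta q ^ (j * (ν : ℤ) - 4 * p * (ν : ℤ) ^ 3)) = 0 ↔
    (q : ℤ) ∣ j := by
  classical
  haveI : Fact q.Prime := ⟨hq⟩
  haveI : NeZero q := ⟨hq.ne_zero⟩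
  set g : ZMod q → ZMod q := fun x => (j : ZMod q) * x - 4 * (p : ZMod q) * x ^ 3 with hgdef
  set N : ZMod q → ℕ := fun y => (Finset.univ.filter fun x => g x = y).card with hNdef
  have step1 : (∑ ν ∈ Finset.range q, zeta q ^ (j * (ν : ℤ) - 4 * p * (ν : ℤ) ^ 3))
      = ∑ x : ZMod q, zeta q ^ (g x).val := by
    refine Finset.sum_nbij' (fun ν => ((ν : ZMod q))) (fun x => x.val)
      (fun a _ => Finset.mem_univ _) (fun x _ => Finset.mem_range.mpr (ZMod.val_lt x))
      (fun a ha => ZMod.val_cast_of_lt (Finset.mem_range.mp ha))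
      (fun x _ => ZMod.natCast_rightInverse x) ?_
    intro ν _
    rw [zeta_zpow_val]
    congr 2
    rw [hgdef]
    push_cast
    ring
  have step2 : ∑ x : ZMod q, zeta q ^ (g x).val
      = ∑ y : ZMod q, (N y : ℂ) * zeta q ^ y.val := by
    rw [← Finset.sum_fiberwise' Finset.univ g (fun y => zeta q ^ y.val)]
    refine Finset.sum_congr rfl fun y _ => ?_
    rw [Finset.sum_const, hNdef, nsmul_eq_mul]
  set N' : ℕ → ℕ := fun r => N ((r : ZMod q)) with hN'def
  have step3 : ∑ y : ZMod q, (N y : ℂ) * zeta q ^ y.val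
      = ∑ r ∈ Finset.range q, (N' r : ℂ) * zeta q ^ r := by
    refine Finset.sum_nbij' (fun y => y.val) (fun r => ((r : ZMod q)))
      (fun y _ => Finset.mem_range.mpr (ZMod.val_lt y)) (fun r _ => Finset.mem_univ _)
      (fun y _ => ZMod.natCast_rightInverse y)
      (fun r hr => ZMod.val_cast_of_lt (Finset.mem_range.mp hr)) ?_
    intro y _
    rw [hN'def]
    simp only [ZMod.natCast_rightInverse y]
  have hNsum : ∑ r ∈ Finset.range q, N' r = q := by
    have h1 : ∑ r ∈ Finset.range q, N' r = ∑ y : ZMod q, N y := by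
      refine Finset.sum_nbij' (fun r => ((r : ZMod q))) (fun y => y.val)
        (fun r _ => Finset.mem_univ _) (fun y _ => Finset.mem_range.mpr (ZMod.val_lt y))
        (fun r hr => ZMod.val_cast_of_lt (Finset.mem_range.mp hr))
        (fun y _ => ZMod.natCast_rightInverse y) (fun r _ => rfl)
    rw [h1, hNdef]
    rw [← Finset.card_eq_sum_card_fiberwise (fun x _ => Finset.mem_univ (g x))]
    rw [Finset.card_univ, ZMod.card]
  have hζ : IsPrimitiveRoot (zeta q) q := zeta_prim hq.ne_zero
  rw [step1, step2, step3, key_sum hq hζ N' hNsum]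
  have stepN : (∀ r < q, N' r = 1) ↔ ∀ y : ZMod q, N y = 1 := by
    constructor
    · intro h y
      have h2 : N ((y.val : ZMod q)) = 1 := h y.val (ZMod.val_lt y)
      rwa [ZMod.natCast_rightInverse y] at h2
    · intro h r _
      exact h _
  have stepB : (∀ y : ZMod q, N y = 1) ↔ Function.Bijective g := by
    constructor
    · intro h1
      constructor
      · intro a b hab
        have h := h1 (g b)
        rw [hNdef] at h
        have ha : a ∈ Finset.univ.filter (fun x => g x = g b) := by
          simp [hab]
        have hb : b ∈ Finset.univ.filter (fun x => g x = g b) := by simp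
        exact Finset.card_le_one.mp (le_of_eq h) a ha b hb
      · intro y
        have h : (Finset.univ.filter fun x => g x = y).card = 1 := h1 y
        have hne : (Finset.univ.filter fun x => g x = y).Nonempty :=
          Finset.card_pos.mp (h ▸ one_pos)
        obtain ⟨x, hx⟩ := hne
        exact ⟨x, (Finset.mem_filter.mp hx).2⟩
    · intro hbij y
      obtain ⟨x, hx, hx'⟩ := hbij.existsUnique y
      show (Finset.univ.filter fun x => g x = y).card = 1
      rw [Finset.card_eq_one]
      refine ⟨x, Finset.eq_singleton_iff_unique_mem.mpr ⟨by simp [hx], ?_⟩⟩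
      intro z hz
      exact hx' z (Finset.mem_filter.mp hz).2
  rw [stepN, stepB, hgdef, g_bij_iff hq hodd hq2 p hp j,
    ZMod.intCast_zmod_eq_zero_iff_dvd]
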